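/- arXiv:1303.2685 — 3 statements merged into one kernel-verified Lean document; each statement's English description precedes it below -/
import Mathlib

section
/- Suppose the normalized Laplacian 𝓛 admits an orthogonal eigendecomposition 𝓛 = U Λ Uᵀ with U an orthogonal n×n real matrix and Λ diagonal. Then for every vector x in ℝ^n, the bilateral filter output x_out = D⁻¹ W x satisfies D^{1/2} x_out = U (I − Λ) Uᵀ D^{1/2} x; i.e. the bilateral filter is a graph spectral filter with spectral response h(λ) = 1 − λ. -/
/-!
With `S = D^{1/2}`, the random-walk matrix `D⁻¹ W` is similar to `I − 𝓛`:
`S (D⁻¹ W) = S⁻¹ W = (S⁻¹ W S⁻¹) S = (I − 𝓛) S`, because `S⁻¹ D S⁻¹ = I`.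
Since `U Uᵀ = I`, also `U (I − Λ) Uᵀ = I − U Λ Uᵀ = I − 𝓛`.
-/

open Matrix

theorem mul_one_sub_mul_of_mul_eq_one {R : Type*} [Ring R] {u v : R} (h : u * v = 1) (a : R) :
    u * (1 - a) * v = 1 - u * a * v := by
  rw [mul_sub, mul_one, sub_mul, h]

namespace Matrix

variable {ι K : Type*} [Fintype ι] [DecidableEq ι] [Field K] {d s : ι → K}

theorem one_sub_inv_diagonal_mul_sub_mul_inv_diagonal (hsd : ∀ j, s j * s j = d j)
    (hs : ∀ j, s j ≠ 0) (W : Matrix ι ι K) :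
    1 - diagonal s⁻¹ * (diagonal d - W) * diagonal s⁻¹ = diagonal s⁻¹ * W * diagonal s⁻¹ := by
  have hnormalized : diagonal s⁻¹ * diagonal d * diagonal s⁻¹ = 1 := by
    rw [diagonal_mul_diagonal, diagonal_mul_diagonal, ← diagonal_one]
    congr 1
    funext j
    simp [← hsd j, hs j]
  rw [mul_sub, sub_mul, hnormalized, sub_sub_cancel]

theorem diagonal_mul_inv_diagonal_mul_eq_one_sub_mul_diagonal (hsd : ∀ j, s j * s j = d j)
    (hs : ∀ j, s j ≠ 0) (W : Matrix ι ι K) :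
    diagonal s * ((diagonal d)⁻¹ * W)
      = (1 - diagonal s⁻¹ * (diagonal d - W) * diagonal s⁻¹) * diagonal s := by
  have hinv : (diagonal d)⁻¹ = diagonal d⁻¹ := by
    refine inv_eq_left_inv ?_
    rw [diagonal_mul_diagonal, ← diagonal_one]
    congr 1
    funext j
    simp only [Pi.inv_apply, ← hsd j]
    field_simp [hs j]
  rw [one_sub_inv_diagonal_mul_sub_mul_inv_diagonal hsd hs, hinv]
  ext i j
  simp only [diagonal_mul, mul_diagonal, Pi.inv_apply, ← hsd]
  rw [inv_mul_cancel_right₀ (hs j)]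
  field_simp

end Matrix

theorem bilateral_filter_spectral_response_general (n : ℕ)
    (W : Matrix (Fin n) (Fin n) ℝ)
    (d : Fin n → ℝ) (hdpos : ∀ j, 0 < d j)
    (D Dhalf Dinvhalf L : Matrix (Fin n) (Fin n) ℝ)
    (hD : D = Matrix.diagonal d)
    (hDhalf : Dhalf = Matrix.diagonal fun j => Real.sqrt (d j))
    (hDinvhalf : Dinvhalf = Matrix.diagonal fun j => (Real.sqrt (d j))⁻¹)
    (hL : L = Dinvhalf * (D - W) * Dinvhalf)
    (U Λ : Matrix (Fin n) (Fin n) ℝ)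
    (hUorth : U * Uᵀ = 1)
    (hdec : L = U * Λ * Uᵀ)
    (x xout : Fin n → ℝ)
    (hxout : xout = (D⁻¹ * W) *ᵥ x) :
    Dhalf *ᵥ xout = (U * (1 - Λ) * Uᵀ) *ᵥ (Dhalf *ᵥ x) := by
  have hsimilar : Dhalf * (D⁻¹ * W) = (1 - L) * Dhalf := by
    rw [hD, hDhalf, hL, hDinvhalf, hD]
    exact diagonal_mul_inv_diagonal_mul_eq_one_sub_mul_diagonal
      (fun j => Real.mul_self_sqrt (hdpos j).le) (fun j => (Real.sqrt_pos.mpr (hdpos j)).ne') W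
  have hspectral : U * (1 - Λ) * Uᵀ = 1 - L := by
    rw [hdec, mul_one_sub_mul_of_mul_eq_one hUorth]
  rw [hxout, mulVec_mulVec, hsimilar, hspectral, mulVec_mulVec]

/-- The bilateral filter is a graph spectral filter with spectral response
`h(λ) = 1 − λ`:  `D^{1/2} x_out = U (I − Λ) Uᵀ D^{1/2} x`. -/
theorem bilateral_filter_spectral_response (n : ℕ) (hn : 0 < n)
    (W : Matrix (Fin n) (Fin n) ℝ) (hWsymm : W.IsSymm)
    (hWnn : ∀ i j, 0 ≤ W i j)
    (d : Fin n → ℝ) (hd : ∀ j, d j = ∑ i, W i j) (hdpos : ∀ j, 0 < d j)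
    (D Dhalf Dinvhalf L : Matrix (Fin n) (Fin n) ℝ)
    (hD : D = Matrix.diagonal d)
    (hDhalf : Dhalf = Matrix.diagonal fun j => Real.sqrt (d j))
    (hDinvhalf : Dinvhalf = Matrix.diagonal fun j => (Real.sqrt (d j))⁻¹)
    (hL : L = Dinvhalf * (D - W) * Dinvhalf)
    (U Λ : Matrix (Fin n) (Fin n) ℝ)
    (hUorth : U * Uᵀ = 1) (hUorth' : Uᵀ * U = 1)
    (hΛ : Λ.IsDiag) (hdec : L = U * Λ * Uᵀ)
    (x xout : Fin n → ℝ)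
    (hxout : xout = (D⁻¹ * W) *ᵥ x) :
    Dhalf *ᵥ xout = (U * (1 - Λ) * Uᵀ) *ᵥ (Dhalf *ᵥ x) :=
  bilateral_filter_spectral_response_general n W d hdpos D Dhalf Dinvhalf L hD hDhalf hDinvhalf hL U
    Λ hUorth hdec x xout hxout
end

section
/- Suppose the normalized Laplacian 𝓛 admits an orthogonal eigendecomposition 𝓛 = U Λ Uᵀ with U an orthogonal n×n real matrix and Λ diagonal. Then for every natural number k and every vector x in ℝ^n, the k-times iterated bilateral filter output x_out = (D⁻¹ W)^k x satisfies D^{1/2} x_out = U (I − Λ)^k Uᵀ D^{1/2} x; i.e. the k-times iterated bilateral filter is a graph spectral filter with spectral response h(λ) = (1 − λ)^k. -/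
open Matrix

/-!
`D^{1/2}` intertwines the random-walk filter with `I - 𝓛 = D^{-1/2} W D^{-1/2}`:
`D^{1/2} (D⁻¹ W) = (I - 𝓛) D^{1/2}`, hence `D^{1/2} (D⁻¹ W)^k = (I - 𝓛)^k D^{1/2}`,
and `(I - 𝓛)^k = U (I - Λ)^k Uᵀ` because `U` is a unit with inverse `Uᵀ`.
-/

namespace Matrix

variable {ι R : Type*} [Fintype ι] [DecidableEq ι] [CommRing R] {S T : Matrix ι ι R}

theorem one_sub_mul_sub_mul_eq_mul_mul (hST : S * T = 1) (W : Matrix ι ι R) :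
    1 - T * (S * S - W) * T = T * W * T := by
  have hTS : T * S = 1 := mul_eq_one_comm.mp hST
  have hcancel : T * (S * S) * T = 1 := by
    rw [← Matrix.mul_assoc, hTS, Matrix.one_mul, hST]
  rw [mul_sub, sub_mul, hcancel, sub_sub_cancel]

theorem semiconjBy_inv_mul_self_mul (hST : S * T = 1) (W : Matrix ι ι R) :
    SemiconjBy S ((S * S)⁻¹ * W) (T * W * T) := by
  have hTS : T * S = 1 := mul_eq_one_comm.mp hST
  have hinv : (S * S)⁻¹ = T * T :=
    inv_eq_right_inv (by rw [Matrix.mul_assoc, ← Matrix.mul_assoc S T, hST, Matrix.one_mul, hST])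
  rw [SemiconjBy, hinv, ← Matrix.mul_assoc, ← Matrix.mul_assoc, hST, Matrix.one_mul,
    Matrix.mul_assoc _ T, hTS, Matrix.mul_one]

end Matrix

theorem iterated_bilateral_filter_spectral_response_general (n : ℕ)
    (W : Matrix (Fin n) (Fin n) ℝ)
    (d : Fin n → ℝ) (hdpos : ∀ j, 0 < d j)
    (D Dhalf Dinvhalf L : Matrix (Fin n) (Fin n) ℝ)
    (hD : D = Matrix.diagonal d)
    (hDhalf : Dhalf = Matrix.diagonal fun j => Real.sqrt (d j))
    (hDinvhalf : Dinvhalf = Matrix.diagonal fun j => (Real.sqrt (d j))⁻¹)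
    (hL : L = Dinvhalf * (D - W) * Dinvhalf)
    (U Λ : Matrix (Fin n) (Fin n) ℝ)
    (hUorth : U * Uᵀ = 1) (hUorth' : Uᵀ * U = 1)
    (hdec : L = U * Λ * Uᵀ)
    (k : ℕ) (x xout : Fin n → ℝ)
    (hxout : xout = ((D⁻¹ * W) ^ k) *ᵥ x) :
    Dhalf *ᵥ xout = (U * (1 - Λ) ^ k * Uᵀ) *ᵥ (Dhalf *ᵥ x) := by
  have hD' : D = Dhalf * Dhalf := by
    rw [hD, hDhalf, diagonal_mul_diagonal]
    congr 1
    funext j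
    exact (Real.mul_self_sqrt (hdpos j).le).symm
  have hDhalf_inv : Dhalf * Dinvhalf = 1 := by
    rw [hDhalf, hDinvhalf, diagonal_mul_diagonal, ← diagonal_one]
    congr 1
    funext j
    exact mul_inv_cancel₀ (Real.sqrt_pos.mpr (hdpos j)).ne'
  have hfilter : SemiconjBy Dhalf (D⁻¹ * W) (1 - L) := by
    rw [hL, hD', one_sub_mul_sub_mul_eq_mul_mul hDhalf_inv]
    exact semiconjBy_inv_mul_self_mul hDhalf_inv W
  have hspectral : (1 - L) ^ k = U * (1 - Λ) ^ k * Uᵀ := by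
    have hconj : 1 - L = U * (1 - Λ) * Uᵀ := by
      rw [hdec, mul_sub, sub_mul, mul_one, hUorth]
    rw [hconj]
    exact Units.conj_pow ⟨U, Uᵀ, hUorth, hUorth'⟩ (1 - Λ) k
  rw [hxout, mulVec_mulVec, (hfilter.pow_right k).eq, hspectral, mulVec_mulVec]

/-- The k-times iterated bilateral filter is a graph spectral filter with spectral
response `h(λ) = (1 − λ)^k`:  `D^{1/2} x_out = U (I − Λ)^k Uᵀ D^{1/2} x`. -/
theorem iterated_bilateral_filter_spectral_response (n : ℕ) (hn : 0 < n)
    (W : Matrix (Fin n) (Fin n) ℝ) (hWsymm : W.IsSymm)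
    (hWnn : ∀ i j, 0 ≤ W i j)
    (d : Fin n → ℝ) (hd : ∀ j, d j = ∑ i, W i j) (hdpos : ∀ j, 0 < d j)
    (D Dhalf Dinvhalf L : Matrix (Fin n) (Fin n) ℝ)
    (hD : D = Matrix.diagonal d)
    (hDhalf : Dhalf = Matrix.diagonal fun j => Real.sqrt (d j))
    (hDinvhalf : Dinvhalf = Matrix.diagonal fun j => (Real.sqrt (d j))⁻¹)
    (hL : L = Dinvhalf * (D - W) * Dinvhalf)
    (U Λ : Matrix (Fin n) (Fin n) ℝ)
    (hUorth : U * Uᵀ = 1) (hUorth' : Uᵀ * U = 1)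
    (hΛ : Λ.IsDiag) (hdec : L = U * Λ * Uᵀ)
    (k : ℕ) (x xout : Fin n → ℝ)
    (hxout : xout = ((D⁻¹ * W) ^ k) *ᵥ x) :
    Dhalf *ᵥ xout = (U * (1 - Λ) ^ k * Uᵀ) *ᵥ (Dhalf *ᵥ x) :=
  iterated_bilateral_filter_spectral_response_general n W d hdpos D Dhalf Dinvhalf L hD hDhalf
    hDinvhalf hL U Λ hUorth hUorth' hdec k x xout hxout
end

section
/- (Theorem 1, paper's main theorem.) Let r₀, r₁, …, r_k be real numbers and consider the graph filter with polynomial spectral response h(λ) = r₀ ∏_{i=1}^k (1 − r_i λ) of degree k, i.e. the pixel-domain transform H = D^{-1/2} (r₀ ∏_{i=1}^k (I − r_i 𝓛)) D^{1/2}. Then H = r₀ ∏_{i=1}^k (I − r_i 𝓛_r), and each factor satisfies I − r_i 𝓛_r = (1 − r_i) I + r_i D⁻¹ W; hence H can be implemented in the pixel domain as an iterative k-step bilateral filtering operation. -/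
open Matrix

/-- Theorem 1 of the paper: a graph filter with polynomial spectral response
`h(λ) = r₀ ∏_{i=1}^k (1 − r_i λ)`, i.e. the pixel-domain transform
`H = D^{-1/2} (r₀ ∏_{i=1}^k (I − r_i 𝓛)) D^{1/2}`, satisfies
`H = r₀ ∏_{i=1}^k (I − r_i 𝓛_r)`, and each factor satisfies
`I − r_i 𝓛_r = (1 − r_i) I + r_i D⁻¹ W`; hence `H` is an iterative
k-step bilateral filtering operation in the pixel domain. -/
theorem poly_spectral_filter_as_iterated_bilateral (n : ℕ) (hn : 0 < n)
    (W : Matrix (Fin n) (Fin n) ℝ) (hWsymm : W.IsSymm)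
    (hWnn : ∀ i j, 0 ≤ W i j)
    (d : Fin n → ℝ) (hd : ∀ j, d j = ∑ i, W i j) (hdpos : ∀ j, 0 < d j)
    (D Dhalf Dinvhalf L Lr : Matrix (Fin n) (Fin n) ℝ)
    (hD : D = Matrix.diagonal d)
    (hDhalf : Dhalf = Matrix.diagonal fun j => Real.sqrt (d j))
    (hDinvhalf : Dinvhalf = Matrix.diagonal fun j => (Real.sqrt (d j))⁻¹)
    (hL : L = Dinvhalf * (D - W) * Dinvhalf)
    (hLr : Lr = D⁻¹ * (D - W))
    (k : ℕ) (r : ℕ → ℝ)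
    (H : Matrix (Fin n) (Fin n) ℝ)
    (hH : H = Dinvhalf *
      (r 0 • ((List.range k).map
        (fun i => (1 : Matrix (Fin n) (Fin n) ℝ) - r (i + 1) • L)).prod) * Dhalf) :
    H = r 0 • ((List.range k).map
        (fun i => (1 : Matrix (Fin n) (Fin n) ℝ) - r (i + 1) • Lr)).prod ∧
    ∀ i, (1 : Matrix (Fin n) (Fin n) ℝ) - r i • Lr
        = (1 - r i) • (1 : Matrix (Fin n) (Fin n) ℝ) + r i • (D⁻¹ * W) := by
  have hsqrt_ne : ∀ j, Real.sqrt (d j) ≠ 0 := fun j =>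
    ne_of_gt (Real.sqrt_pos.mpr (hdpos j))
  have hDinv : D⁻¹ = Matrix.diagonal fun j => (d j)⁻¹ := by
    rw [hD]
    apply Matrix.inv_eq_right_inv
    rw [Matrix.diagonal_mul_diagonal]
    have : (fun j => d j * (d j)⁻¹) = fun _ => (1 : ℝ) := by
      funext j; exact mul_inv_cancel₀ (hdpos j).ne'
    rw [this, Matrix.diagonal_one]
  have hsq : Dinvhalf * Dinvhalf = D⁻¹ := by
    rw [hDinvhalf, hDinv, Matrix.diagonal_mul_diagonal]
    have : (fun j => (Real.sqrt (d j))⁻¹ * (Real.sqrt (d j))⁻¹) = fun j => (d j)⁻¹ := by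
      funext j; rw [← mul_inv, Real.mul_self_sqrt (hdpos j).le]
    rw [this]
  have hIH : Dinvhalf * Dhalf = 1 := by
    rw [hDinvhalf, hDhalf, Matrix.diagonal_mul_diagonal]
    have : (fun j => (Real.sqrt (d j))⁻¹ * Real.sqrt (d j)) = fun _ => (1 : ℝ) := by
      funext j; exact inv_mul_cancel₀ (hsqrt_ne j)
    rw [this, Matrix.diagonal_one]
  have hHI : Dhalf * Dinvhalf = 1 := by
    rw [hDhalf, hDinvhalf, Matrix.diagonal_mul_diagonal]
    have : (fun j => Real.sqrt (d j) * (Real.sqrt (d j))⁻¹) = fun _ => (1 : ℝ) := by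
      funext j; exact mul_inv_cancel₀ (hsqrt_ne j)
    rw [this, Matrix.diagonal_one]
  have hconjL : Dinvhalf * L * Dhalf = Lr := by
    rw [hL, hLr, ← hsq]
    simp only [Matrix.mul_assoc]
    rw [hIH, Matrix.mul_one]
  have hfac : ∀ i, Dinvhalf * ((1 : Matrix (Fin n) (Fin n) ℝ) - r (i + 1) • L) * Dhalf
      = (1 : Matrix (Fin n) (Fin n) ℝ) - r (i + 1) • Lr := by
    intro i
    rw [Matrix.mul_sub, Matrix.sub_mul, Matrix.mul_one, hIH, Matrix.mul_smul,
      Matrix.smul_mul, hconjL]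
  have hprod : ∀ m, Dinvhalf * ((List.range m).map
      (fun i => (1 : Matrix (Fin n) (Fin n) ℝ) - r (i + 1) • L)).prod * Dhalf
      = ((List.range m).map
      (fun i => (1 : Matrix (Fin n) (Fin n) ℝ) - r (i + 1) • Lr)).prod := by
    intro m
    induction m with
    | zero => simp [hIH]
    | succ m ih =>
      rw [List.range_succ, List.map_append, List.map_append, List.prod_append,
        List.prod_append]
      simp only [List.map_cons, List.map_nil, List.prod_cons, List.prod_nil,
        Matrix.mul_one]
      rw [← ih, ← hfac m]
      simp only [Matrix.mul_assoc]
      rw [← Matrix.mul_assoc Dhalf Dinvhalf, hHI, Matrix.one_mul]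
  constructor
  · rw [hH, Matrix.mul_smul, Matrix.smul_mul, hprod]
  · intro i
    have hDD : D⁻¹ * D = 1 := by
      rw [hDinv, hD, Matrix.diagonal_mul_diagonal]
      have : (fun j => (d j)⁻¹ * d j) = fun _ => (1 : ℝ) := by
        funext j; exact inv_mul_cancel₀ (hdpos j).ne'
      rw [this, Matrix.diagonal_one]
    rw [hLr, Matrix.mul_sub, hDD, smul_sub, sub_smul, one_smul]
    abel
end
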